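/- arXiv:1408.1197 — 3 statements merged into one kernel-verified Lean document; each statement's English description precedes it below -/
import Mathlib

section
/- For every ε > 0 there exists a natural number N depending only on ε (and not on ω, d, h₁, h₂) with the following property: for all ω > 0, all d > 1 and all h₁, h₂ > 0 satisfying d ≥ 2·(max(h₁,h₂))², there exist complex-valued functions α₁,…,α_N on R₁ and β₁,…,β_N on R₂ such that |exp(iω‖x−y‖) − Σ_{i=1}^N αᵢ(x)βᵢ(y)| ≤ ε for all x ∈ R₁ and y ∈ R₂. (Since |exp(iω‖x−y‖)| = 1, this absolute accuracy coincides with relative accuracy ε.) -/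
open Real

/-- The rectangle `R₁ = [dλ/2, 3dλ/2] × [−hλ/2, hλ/2]` with `λ = 2π/ω`. -/
noncomputable def rectR1 (ω d h : ℝ) : Set (EuclideanSpace ℝ (Fin 2)) :=
  {x | x 0 ∈ Set.Icc (d * (2 * Real.pi / ω) / 2) (3 * d * (2 * Real.pi / ω) / 2) ∧
       x 1 ∈ Set.Icc (-(h * (2 * Real.pi / ω) / 2)) (h * (2 * Real.pi / ω) / 2)}

/-- The rectangle `R₂ = [−3dλ/2, −dλ/2] × [−hλ/2, hλ/2]` with `λ = 2π/ω`. -/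
noncomputable def rectR2 (ω d h : ℝ) : Set (EuclideanSpace ℝ (Fin 2)) :=
  {y | y 0 ∈ Set.Icc (-(3 * d * (2 * Real.pi / ω) / 2)) (-(d * (2 * Real.pi / ω) / 2)) ∧
       y 1 ∈ Set.Icc (-(h * (2 * Real.pi / ω) / 2)) (h * (2 * Real.pi / ω) / 2)}

open Finset MvPolynomial Complex

/-!
Write `s = x₀ - y₀` and `t = x₁ - y₁`. Rationalising, `ω√(s² + t²) = ωs + ωt²/(s + √(s² + t²))`,
and `exp(iωs) = exp(iωx₀)·exp(-iωy₀)` is already separated. After rescaling the coordinates by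
`dλ` and `hλ` (with `h = max h₁ h₂`) the remainder becomes one fixed continuous function of six
variables ranging over a fixed box: the four rescaled coordinates and the parameters `h²/d` and
`h²/d²`, which lie in `[0, 1/2]` because `d ≥ 2h²`. By Stone–Weierstrass its exponential is
uniformly approximated on the box by a single polynomial, whose number of monomials therefore
depends only on `ε`, and every monomial is a product of a function of `x` and a function of `y`.
-/

theorem MvPolynomial.exists_eval_mul_eq_sum {R σ X Y : Type*} [CommSemiring R]
    (P : MvPolynomial σ R) (f : X → σ → R) (g : Y → σ → R) :
    ∃ α : Fin #P.support → X → R, ∃ β : Fin #P.support → Y → R,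
      ∀ x y, eval (f x * g y) P = ∑ k, α k x * β k y := by
  let e := P.support.equivFin.symm
  refine ⟨fun k x => coeff (e k) P * ∏ i ∈ (e k : σ →₀ ℕ).support, f x i ^ (e k : σ →₀ ℕ) i,
    fun k y => ∏ i ∈ (e k : σ →₀ ℕ).support, g y i ^ (e k : σ →₀ ℕ) i, fun x y => ?_⟩
  rw [eval_eq, ← sum_coe_sort, ← e.sum_comp]
  simp only [Pi.mul_apply, mul_pow, prod_mul_distrib, mul_assoc]

theorem exists_mvPolynomial_near_of_continuousOn {ι : Type*} {K : Set (ι → ℝ)}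
    (hK : IsCompact K) {F : (ι → ℝ) → ℝ} (hF : ContinuousOn F K) {ε : ℝ} (hε : 0 < ε) :
    ∃ P : MvPolynomial ι ℝ, ∀ w ∈ K, |eval w P - F w| < ε := by
  have : CompactSpace K := isCompact_iff_compactSpace.mp hK
  let coord : ι → C(K, ℝ) := fun i =>
    ⟨fun w => w.1 i, (continuous_apply i).comp continuous_subtype_val⟩
  have hsep : (aeval (R := ℝ) coord).range.SeparatesPoints := by
    intro u v huv
    obtain ⟨i, hi⟩ := Function.ne_iff.mp (Subtype.coe_ne_coe.mpr huv)
    exact ⟨coord i, ⟨coord i, ⟨X i, aeval_X coord i⟩, rfl⟩, hi⟩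
  obtain ⟨⟨_, P, rfl⟩, hP⟩ := ContinuousMap.exists_mem_subalgebra_near_continuous_of_separatesPoints
    _ hsep _ hF.domRestrict ε hε
  refine ⟨P, fun w hw => ?_⟩
  have hPw : aeval coord P ⟨w, hw⟩ = eval w P :=
    comp_aeval_apply (f := coord) (ContinuousMap.evalAlgHom ℝ ℝ (⟨w, hw⟩ : K)) P
  simpa [hPw] using hP ⟨w, hw⟩

theorem exists_mvPolynomial_near_of_continuousOn_complex {ι : Type*} {K : Set (ι → ℝ)}
    (hK : IsCompact K) {F : (ι → ℝ) → ℂ} (hF : ContinuousOn F K) {ε : ℝ} (hε : 0 < ε) :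
    ∃ P : MvPolynomial ι ℂ, ∀ w ∈ K, ‖eval (fun i => (w i : ℂ)) P - F w‖ < ε := by
  obtain ⟨p, hp⟩ := exists_mvPolynomial_near_of_continuousOn hK
    (continuous_re.comp_continuousOn hF) (half_pos hε)
  obtain ⟨q, hq⟩ := exists_mvPolynomial_near_of_continuousOn hK
    (continuous_im.comp_continuousOn hF) (half_pos hε)
  refine ⟨map ofRealHom p + C I * map ofRealHom q, fun w hw => ?_⟩
  have hmap (r : MvPolynomial ι ℝ) :
      eval (fun i => (w i : ℂ)) (map ofRealHom r) = eval w r :=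
    (map_eval ofRealHom w r).symm
  rw [map_add, map_mul, eval_C, hmap, hmap]
  calc _ ≤ |eval w p - (F w).re| + |eval w q - (F w).im| := by
        simpa using norm_le_abs_re_add_abs_im (eval w p + I * eval w q - F w)
    _ < ε / 2 + ε / 2 := add_lt_add (hp w hw) (hq w hw)
    _ = ε := add_halves ε

/-- With `s = dλσ`, `t = hλτ`, `a = h²/d` and `b = h²/d²`, one has
`ω√(s² + t²) = ωs + phaseRemainder σ τ a b`. -/
noncomputable def phaseRemainder (σ τ a b : ℝ) : ℝ :=
  2 * π * a * τ ^ 2 / (σ + √(σ ^ 2 + b * τ ^ 2))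

theorem sqrt_sq_add_sq_eq_add_div {s : ℝ} (hs : 0 < s) (t : ℝ) :
    √(s ^ 2 + t ^ 2) = s + t ^ 2 / (s + √(s ^ 2 + t ^ 2)) := by
  have hr : √(s ^ 2 + t ^ 2) ^ 2 = s ^ 2 + t ^ 2 := sq_sqrt (by positivity)
  have hpos : 0 < s + √(s ^ 2 + t ^ 2) := by positivity
  field_simp
  linear_combination hr

theorem mul_sqrt_eq_add_phaseRemainder {ω d h s : ℝ} (hω : 0 < ω) (hd : 0 < d) (hh : 0 < h)
    (hs : 0 < s) (t : ℝ) :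
    ω * √(s ^ 2 + t ^ 2) = ω * s + phaseRemainder (s / (d * (2 * π / ω)))
      (t / (h * (2 * π / ω))) (h ^ 2 / d) (h ^ 2 / d ^ 2) := by
  set L := 2 * π / ω with hL
  have hLpos : 0 < L := by positivity
  have hrescale : √((s / (d * L)) ^ 2 + h ^ 2 / d ^ 2 * (t / (h * L)) ^ 2) =
      √(s ^ 2 + t ^ 2) / (d * L) := by
    rw [show (s / (d * L)) ^ 2 + h ^ 2 / d ^ 2 * (t / (h * L)) ^ 2 =
        (s ^ 2 + t ^ 2) / (d * L) ^ 2 by field_simp, sqrt_div' _ (by positivity),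
      sqrt_sq (by positivity)]
  have hωL : ω * L = 2 * π := by rw [hL]; field_simp
  rw [phaseRemainder, hrescale]
  nth_rewrite 1 [sqrt_sq_add_sq_eq_add_div hs t]
  rw [← hωL]
  field_simp

noncomputable def phaseBox : Set (Fin 6 → ℝ) :=
  Set.Icc ![1 / 2, -(1 / 2), 1 / 2, -(1 / 2), 0, 0] ![3 / 2, 1 / 2, 3 / 2, 1 / 2, 1 / 2, 1 / 2]

noncomputable def phaseRemainderOfCoords (w : Fin 6 → ℝ) : ℝ :=
  phaseRemainder (w 0 + w 2) (w 1 + w 3) (w 4) (w 5)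

theorem continuousOn_phaseRemainderOfCoords : ContinuousOn phaseRemainderOfCoords phaseBox := by
  refine ContinuousOn.div (by fun_prop) (by fun_prop) fun w hw => ?_
  have h0 : 1 / 2 ≤ w 0 := by simpa using hw.1 0
  have h2 : 1 / 2 ≤ w 2 := by simpa using hw.1 2
  positivity

/-- Padding with `1`s makes `sourceCoords ω d h x * targetCoords ω d h y` the point of `phaseBox`
attached to `(x, y)`, with every factor depending on only one of `x` and `y`. -/
noncomputable def sourceCoords (ω d h : ℝ) (x : EuclideanSpace ℝ (Fin 2)) : Fin 6 → ℝ :=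
  ![x 0 / (d * (2 * π / ω)), x 1 / (h * (2 * π / ω)), 1, 1, h ^ 2 / d, h ^ 2 / d ^ 2]

noncomputable def targetCoords (ω d h : ℝ) (y : EuclideanSpace ℝ (Fin 2)) : Fin 6 → ℝ :=
  ![1, 1, -y 0 / (d * (2 * π / ω)), -y 1 / (h * (2 * π / ω)), 1, 1]

theorem mul_norm_sub_eq_add_phaseRemainderOfCoords {ω d h : ℝ} (hω : 0 < ω) (hd : 0 < d)
    (hh : 0 < h) {x y : EuclideanSpace ℝ (Fin 2)} (hxy : y 0 < x 0) :
    ω * ‖x - y‖ = ω * x 0 - ω * y 0 +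
      phaseRemainderOfCoords (sourceCoords ω d h x * targetCoords ω d h y) := by
  rw [EuclideanSpace.norm_eq, Fin.sum_univ_two]
  simp only [PiLp.sub_apply, Real.norm_eq_abs, sq_abs]
  rw [mul_sqrt_eq_add_phaseRemainder hω hd hh (sub_pos.2 hxy), phaseRemainderOfCoords]
  simp only [Fin.isValue, sourceCoords, targetCoords, Pi.mul_apply, Matrix.cons_val_zero, mul_one,
    Matrix.cons_val, one_mul, Matrix.cons_val_one]
  ring_nf

theorem sourceCoords_mul_targetCoords_mem_phaseBox {ω d h₁ h₂ H : ℝ} (hω : 0 < ω) (hd : 1 < d)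
    (hH : 0 < H) (h₁H : h₁ ≤ H) (h₂H : h₂ ≤ H) (hdH : 2 * H ^ 2 ≤ d)
    {x y : EuclideanSpace ℝ (Fin 2)} (hx : x ∈ rectR1 ω d h₁) (hy : y ∈ rectR2 ω d h₂) :
    sourceCoords ω d H x * targetCoords ω d H y ∈ phaseBox := by
  obtain ⟨⟨hx0, hx0'⟩, hx1, hx1'⟩ := hx
  obtain ⟨⟨hy0, hy0'⟩, hy1, hy1'⟩ := hy
  have hL : 0 < 2 * π / ω := by positivity
  have h₁L := mul_le_mul_of_nonneg_right h₁H hL.le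
  have h₂L := mul_le_mul_of_nonneg_right h₂H hL.le
  refine ⟨fun i => ?_, fun i => ?_⟩ <;> fin_cases i <;>
    simp only [Fin.zero_eta, Fin.mk_one, Fin.reduceFinMk, Fin.isValue, one_div,
      Matrix.cons_val_zero, Matrix.cons_val_one, Matrix.cons_val, sourceCoords, targetCoords,
      Pi.mul_apply, mul_one, one_mul] <;>
    first
    | positivity
    | (rw [le_div_iff₀ (by positivity)]; nlinarith)
    | (rw [div_le_iff₀ (by positivity)]; nlinarith)

theorem MvPolynomial.exists_cexp_mul_eval_mul_eq_sum {σ X Y : Type*} (P : MvPolynomial σ ℂ)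
    (a : X → ℝ) (b : Y → ℝ) (f : X → σ → ℝ) (g : Y → σ → ℝ) :
    ∃ α : Fin #P.support → X → ℂ, ∃ β : Fin #P.support → Y → ℂ, ∀ x y,
      ∑ k, α k x * β k y = exp (I * ↑(a x - b y)) * eval (fun i => ((f x * g y) i : ℂ)) P := by
  obtain ⟨α, β, hαβ⟩ := P.exists_eval_mul_eq_sum (fun x i => (f x i : ℂ)) (fun y i => (g y i : ℂ))
  refine ⟨fun k x => exp (I * a x) * α k x, fun k y => exp (-(I * b y)) * β k y, fun x y => ?_⟩
  have hprod : (fun i => ((f x * g y) i : ℂ)) = (fun i => (f x i : ℂ)) * fun i => (g y i : ℂ) := by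
    ext i
    exact ofReal_mul _ _
  rw [hprod, hαβ, mul_sum, ofReal_sub, mul_sub, sub_eq_add_neg, Complex.exp_add]
  exact sum_congr rfl fun k _ => by ring

theorem norm_cexp_add_sub_mul (a c : ℝ) (z : ℂ) :
    ‖exp (I * ↑(a + c)) - exp (I * a) * z‖ = ‖exp (I * c) - z‖ := by
  rw [ofReal_add, mul_add, Complex.exp_add, ← mul_sub, norm_mul, norm_exp_I_mul_ofReal, one_mul]

/-- For every `ε > 0` there is an `N` depending only on `ε` such that for all admissible
`ω, d, h₁, h₂`, the oscillatory kernel `exp(iω‖x−y‖)` admits an `N`-term separated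
approximation on `R₁ × R₂` with (absolute = relative) accuracy `ε`. -/
theorem oscillatory_kernel_lowrank (ε : ℝ) (hε : 0 < ε) :
    ∃ N : ℕ, ∀ ω d h₁ h₂ : ℝ, 0 < ω → 1 < d → 0 < h₁ → 0 < h₂ →
      2 * max h₁ h₂ ^ 2 ≤ d →
      ∃ α β : Fin N → EuclideanSpace ℝ (Fin 2) → ℂ,
        ∀ x ∈ rectR1 ω d h₁, ∀ y ∈ rectR2 ω d h₂,
          ‖Complex.exp (Complex.I * ((ω * ‖x - y‖ : ℝ) : ℂ)) - ∑ i, α i x * β i y‖ ≤ ε := by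
  have hF : ContinuousOn (fun w => exp (I * phaseRemainderOfCoords w)) phaseBox := by
    have := continuousOn_phaseRemainderOfCoords
    fun_prop
  obtain ⟨P, hP⟩ := exists_mvPolynomial_near_of_continuousOn_complex isCompact_Icc hF hε
  refine ⟨#P.support, fun ω d h₁ h₂ hω hd hh₁ _ hdH => ?_⟩
  set H := max h₁ h₂
  have hH : 0 < H := hh₁.trans_le (le_max_left _ _)
  obtain ⟨α, β, hαβ⟩ := P.exists_cexp_mul_eval_mul_eq_sum (fun x => ω * x 0) (fun y => ω * y 0)
    (sourceCoords ω d H) (targetCoords ω d H)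
  refine ⟨α, β, fun x hx y hy => ?_⟩
  have hxy : y 0 < x 0 := by
    have : 0 < d * (2 * π / ω) := by positivity
    linarith [hx.1.1, hy.1.2]
  have hw := sourceCoords_mul_targetCoords_mem_phaseBox hω hd hH (le_max_left _ _)
    (le_max_right _ _) hdH hx hy
  rw [mul_norm_sub_eq_add_phaseRemainderOfCoords hω (zero_lt_one.trans hd) hH hxy, hαβ,
    norm_cexp_add_sub_mul, norm_sub_rev]
  exact (hP _ hw).le
end

section
/- For all x ∈ R₁ and y ∈ R₂, the phase deviation ω(‖x−y‖ − (x₁ − y₁)) satisfies 0 ≤ ω(‖x−y‖ − (x₁ − y₁)) ≤ π/2. Equivalently, writing α = (x₂−y₂)²/(x₁−y₁)², the quantity ω(x₁−y₁)(√(1+α) − 1), which equals ω(‖x−y‖ − (x₁−y₁)), lies in [0, π/2]. -/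
open Real

set_option maxHeartbeats 800000

/-- For `x ∈ R₁` and `y ∈ R₂`, the phase deviation `ω(‖x−y‖ − (x₁−y₁))` lies in `[0, π/2]`,
and it equals `ω(x₁−y₁)(√(1+α) − 1)` where `α = (x₂−y₂)²/(x₁−y₁)²`. -/
theorem phase_deviation_bound (ω d h₁ h₂ : ℝ) (hω : 0 < ω) (hd : 1 < d)
    (hh₁ : 0 < h₁) (hh₂ : 0 < h₂) (hsep : 2 * max h₁ h₂ ^ 2 ≤ d)
    (x y : EuclideanSpace ℝ (Fin 2)) (hx : x ∈ rectR1 ω d h₁) (hy : y ∈ rectR2 ω d h₂) :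
    0 ≤ ω * (‖x - y‖ - (x 0 - y 0)) ∧
      ω * (‖x - y‖ - (x 0 - y 0)) ≤ Real.pi / 2 ∧
      ω * (‖x - y‖ - (x 0 - y 0)) =
        ω * (x 0 - y 0) *
          (Real.sqrt (1 + (x 1 - y 1) ^ 2 / (x 0 - y 0) ^ 2) - 1) := by
  obtain ⟨⟨hx0l, hx0r⟩, hx1l, hx1r⟩ := hx
  obtain ⟨⟨hy0l, hy0r⟩, hy1l, hy1r⟩ := hy
  set L := 2 * Real.pi / ω with hLdef
  have hπ := Real.pi_pos
  have hL : 0 < L := by positivity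
  set a := x 0 - y 0 with hadef
  set b := x 1 - y 1 with hbdef
  have haL : d * L ≤ a := by simp only [hadef]; linarith
  have ha : 0 < a := lt_of_lt_of_le (by nlinarith) haL
  have hb2 : b ^ 2 ≤ d * L ^ 2 / 2 := by
    have hb : |b| ≤ (h₁ + h₂) * L / 2 := by
      rw [abs_le]; constructor <;> simp only [hbdef] <;> nlinarith
    have h1 : h₁ ≤ max h₁ h₂ := le_max_left _ _
    have h2 : h₂ ≤ max h₁ h₂ := le_max_right _ _
    have := abs_nonneg b
    have hsq : b ^ 2 ≤ ((h₁ + h₂) * L / 2) ^ 2 := by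
      rw [← sq_abs]; nlinarith
    have hm0 : 0 < max h₁ h₂ := lt_of_lt_of_le hh₁ h1
    have hm2 : (h₁ + h₂) ^ 2 ≤ 2 * d := by nlinarith
    nlinarith [mul_le_mul_of_nonneg_right hm2 (sq_nonneg L)]
  have hnorm : ‖x - y‖ = Real.sqrt (a ^ 2 + b ^ 2) := by
    rw [EuclideanSpace.norm_eq, Fin.sum_univ_two]
    simp [hadef, hbdef, Real.norm_eq_abs, sq_abs]
  have hge : a ≤ Real.sqrt (a ^ 2 + b ^ 2) := by
    have h := Real.sqrt_le_sqrt (show a ^ 2 ≤ a ^ 2 + b ^ 2 by nlinarith [sq_nonneg b])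
    rwa [Real.sqrt_sq ha.le] at h
  have hle : Real.sqrt (a ^ 2 + b ^ 2) ≤ a + b ^ 2 / (2 * a) := by
    rw [show a + b ^ 2 / (2 * a) = Real.sqrt ((a + b ^ 2 / (2 * a)) ^ 2) from
      (Real.sqrt_sq (by positivity)).symm]
    apply Real.sqrt_le_sqrt
    have : (a + b ^ 2 / (2 * a)) ^ 2 = a ^ 2 + b ^ 2 + (b ^ 2 / (2 * a)) ^ 2 := by
      field_simp; ring
    rw [this]; nlinarith [sq_nonneg (b ^ 2 / (2 * a))]
  refine ⟨?_, ?_, ?_⟩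
  · rw [hnorm]; nlinarith
  · rw [hnorm]
    have key : b ^ 2 / (2 * a) ≤ L / 4 := by
      rw [div_le_div_iff₀ (by positivity) (by norm_num)]
      nlinarith
    have : ω * L / 4 = Real.pi / 2 := by
      rw [hLdef]; field_simp; ring
    nlinarith
  · rw [hnorm]
    have : Real.sqrt (1 + b ^ 2 / a ^ 2) = Real.sqrt (a ^ 2 + b ^ 2) / a := by
      rw [show 1 + b ^ 2 / a ^ 2 = (a ^ 2 + b ^ 2) / a ^ 2 by field_simp,
        Real.sqrt_div (by positivity), Real.sqrt_sq ha.le]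
    rw [this]; field_simp
end

section
/- For every ε > 0 there exists a natural number N depending only on ε with the following property: for all ω > 0, all d > 1 and all h₁, h₂ > 0 satisfying d ≥ 2·(max(h₁,h₂))², there exist complex-valued functions α₁,…,α_N on R₁ and β₁,…,β_N on R₂ such that |exp(iω(‖x−y‖ − (x₁ − y₁))) − Σ_{i=1}^N αᵢ(x)βᵢ(y)| ≤ ε for all x ∈ R₁, y ∈ R₂. -/
/-!
Rescale `x ∈ R₁`, `y ∈ R₂` to `p = (x₀/(dλ), x₁/(λ√d))` and `q = (y₀/(dλ), y₁/(λ√d))`.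
Rationalising `√(a² + b²) - a = b² / (a + √(a² + b²))` and using `ωλ = 2π`, the phase becomes
`ω(‖x - y‖ - (x₀ - y₀)) = 2π v² / (s + √(s² + v²/d))` with `(s, v) = p - q`. The hypothesis
`d ≥ 2 max(h₁, h₂)²` keeps `p` and `q` in fixed boxes, and `1/d ∈ [0, 1]`, so the residual factor is
one fixed continuous function of `(p, (q, 1/d))` on one fixed compact set, whatever `ω` and `d`.
By Stone–Weierstrass, finite sums of separated products `a(p) b(q, δ)` are uniformly dense in the
continuous functions on a product of compact Hausdorff spaces, and `N` depends on `ε` only.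
-/

open Real

open Set TensorProduct

section SeparatedApproximation

variable {𝕜 X Y : Type*} [RCLike 𝕜] [TopologicalSpace X] [TopologicalSpace Y]

namespace ContinuousMap

variable (𝕜 X Y) in
noncomputable def prodTensorMap : C(X, 𝕜) ⊗[𝕜] C(Y, 𝕜) →ₐ[𝕜] C(X × Y, 𝕜) :=
  Algebra.TensorProduct.productMap (compRightAlgHom 𝕜 𝕜 fst) (compRightAlgHom 𝕜 𝕜 snd)

@[simp]
lemma prodTensorMap_tmul (a : C(X, 𝕜)) (b : C(Y, 𝕜)) (p : X × Y) :
    prodTensorMap 𝕜 X Y (a ⊗ₜ b) p = a p.1 * b p.2 := rfl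

variable (𝕜 X Y) in
noncomputable def separatedProducts : StarSubalgebra 𝕜 C(X × Y, 𝕜) where
  toSubalgebra := (prodTensorMap 𝕜 X Y).range
  star_mem' := by
    rintro _ ⟨z, rfl⟩
    obtain ⟨N, a, b, rfl⟩ := exists_sum_tmul_eq z
    refine ⟨∑ i, star (a i) ⊗ₜ star (b i), ?_⟩
    ext p
    simp [map_sum]

lemma prodTensorMap_mem_separatedProducts (z : C(X, 𝕜) ⊗[𝕜] C(Y, 𝕜)) :
    prodTensorMap 𝕜 X Y z ∈ separatedProducts 𝕜 X Y := ⟨z, rfl⟩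

lemma separatedProducts_separatesPoints [T35Space X] [T35Space Y] :
    (separatedProducts 𝕜 X Y).SeparatesPoints := by
  rintro ⟨x, y⟩ ⟨x', y'⟩ hne
  by_cases hx : x = x'
  · obtain ⟨f, hf, hfy⟩ :=
      separatesPoints_continuous_of_t35Space (X := Y) fun h => hne (Prod.ext hx h)
    let g : C(Y, 𝕜) := ⟨fun y => (f y : 𝕜), RCLike.continuous_ofReal.comp hf⟩
    refine ⟨_, ⟨_, prodTensorMap_mem_separatedProducts (1 ⊗ₜ g), rfl⟩, ?_⟩
    simpa [g] using hfy
  · obtain ⟨f, hf, hfx⟩ := separatesPoints_continuous_of_t35Space hx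
    let g : C(X, 𝕜) := ⟨fun x => (f x : 𝕜), RCLike.continuous_ofReal.comp hf⟩
    refine ⟨_, ⟨_, prodTensorMap_mem_separatedProducts (g ⊗ₜ 1), rfl⟩, ?_⟩
    simpa [g] using hfx

theorem exists_sum_mul_near [CompactSpace X] [CompactSpace Y] [T2Space X] [T2Space Y]
    (G : C(X × Y, 𝕜)) {ε : ℝ} (hε : 0 < ε) :
    ∃ (N : ℕ) (a : Fin N → C(X, 𝕜)) (b : Fin N → C(Y, 𝕜)),
      ∀ x y, ‖G (x, y) - ∑ i, a i x * b i y‖ < ε := by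
  have hG : G ∈ (separatedProducts 𝕜 X Y).topologicalClosure := by
    rw [starSubalgebra_topologicalClosure_eq_top_of_separatesPoints _
      separatedProducts_separatesPoints]
    trivial
  obtain ⟨_, ⟨z, rfl⟩, hz⟩ := Metric.mem_closure_iff.mp hG ε hε
  obtain ⟨N, a, b, rfl⟩ := exists_sum_tmul_eq z
  refine ⟨N, a, b, fun x y => ?_⟩
  have := (dist_apply_le_dist (x, y)).trans_lt hz
  simpa [dist_eq_norm, map_sum] using this

end ContinuousMap

theorem exists_sum_mul_near_of_continuousOn {A B : Type*} [TopologicalSpace A]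
    [TopologicalSpace B] [T2Space A] [T2Space B] {s : Set A} {t : Set B} (hs : IsCompact s)
    (ht : IsCompact t) {G : A × B → 𝕜} (hG : ContinuousOn G (s ×ˢ t)) {ε : ℝ} (hε : 0 < ε) :
    ∃ (N : ℕ) (a : Fin N → A → 𝕜) (b : Fin N → B → 𝕜),
      ∀ x ∈ s, ∀ y ∈ t, ‖G (x, y) - ∑ i, a i x * b i y‖ < ε := by
  classical
  have := isCompact_iff_compactSpace.mp hs
  have := isCompact_iff_compactSpace.mp ht
  let G' : C(s × t, 𝕜) :=
    ⟨fun p => G (p.1, p.2), hG.comp_continuous (by fun_prop) fun p => ⟨p.1.2, p.2.2⟩⟩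
  obtain ⟨N, a, b, hab⟩ := ContinuousMap.exists_sum_mul_near G' hε
  refine ⟨N, fun i x => if hx : x ∈ s then a i ⟨x, hx⟩ else 0,
    fun i y => if hy : y ∈ t then b i ⟨y, hy⟩ else 0, fun x hx y hy => ?_⟩
  simp only [hx, hy, dite_true]
  exact hab ⟨x, hx⟩ ⟨y, hy⟩

end SeparatedApproximation

namespace ResidualFactor

noncomputable def scaledPhase (s v δ : ℝ) : ℝ := v ^ 2 / (s + √(s ^ 2 + δ * v ^ 2))

lemma mul_scaledPhase_eq {l d a : ℝ} (b : ℝ) (hl : 0 < l) (hd : 0 < d) (ha : 0 < a) :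
    l * scaledPhase (a / (d * l)) (b / (l * √d)) d⁻¹ = √(a ^ 2 + b ^ 2) - a := by
  have hr : √(a ^ 2 + b ^ 2) ^ 2 = a ^ 2 + b ^ 2 := Real.sq_sqrt (by positivity)
  have hsqrt :
      √((a / (d * l)) ^ 2 + d⁻¹ * (b / (l * √d)) ^ 2) = √(a ^ 2 + b ^ 2) / (d * l) := by
    rw [← Real.sqrt_sq (by positivity : 0 ≤ √(a ^ 2 + b ^ 2) / (d * l)),
      div_pow √(a ^ 2 + b ^ 2), hr]
    congr 1
    field_simp
    rw [Real.sq_sqrt hd.le]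
    ring
  have hpos : 0 < a + √(a ^ 2 + b ^ 2) := by positivity
  rw [scaledPhase, hsqrt]
  field_simp
  rw [Real.sq_sqrt hd.le]
  linear_combination (-d) * hr

noncomputable def scaleCoords (ω d : ℝ) (x : EuclideanSpace ℝ (Fin 2)) : ℝ × ℝ :=
  (x 0 / (d * (2 * π / ω)), x 1 / (2 * π / ω * √d))

noncomputable def residualKernel (p : (ℝ × ℝ) × (ℝ × ℝ) × ℝ) : ℂ :=
  Complex.exp (Complex.I * ↑(2 * π * scaledPhase (p.1.1 - p.2.1.1) (p.1.2 - p.2.1.2) p.2.2))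

lemma continuousOn_residualKernel :
    ContinuousOn residualKernel
      ((Icc (1 / 2) (3 / 2) ×ˢ Icc (-1) 1) ×ˢ
        ((Icc (-(3 / 2)) (-(1 / 2)) ×ˢ Icc (-1) 1) ×ˢ Icc 0 1)) := by
  refine ((continuousOn_const.mul (Complex.continuous_ofReal.comp_continuousOn
    (continuousOn_const.mul ?_))).cexp)
  refine ContinuousOn.div (by fun_prop) (by fun_prop) ?_
  rintro ⟨⟨s, v⟩, ⟨s', v'⟩, δ⟩ ⟨⟨⟨hs, -⟩, -⟩, ⟨⟨-, hs'⟩, -⟩, hδ, -⟩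
  have : 0 ≤ √((s - s') ^ 2 + δ * (v - v') ^ 2) := sqrt_nonneg _
  dsimp only
  linarith

lemma norm_sub_eq_sqrt (x y : EuclideanSpace ℝ (Fin 2)) :
    ‖x - y‖ = √((x 0 - y 0) ^ 2 + (x 1 - y 1) ^ 2) := by
  simp [EuclideanSpace.norm_eq, Fin.sum_univ_two, sq_abs]

variable {ω d h : ℝ} {x y : EuclideanSpace ℝ (Fin 2)}

lemma residual_eq_residualKernel {h₁ h₂ : ℝ} (hω : 0 < ω) (hd : 0 < d)
    (hx : x ∈ rectR1 ω d h₁) (hy : y ∈ rectR2 ω d h₂) :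
    Complex.exp (Complex.I * ((ω * (‖x - y‖ - (x 0 - y 0)) : ℝ) : ℂ)) =
      residualKernel (scaleCoords ω d x, scaleCoords ω d y, d⁻¹) := by
  have hl : 0 < 2 * π / ω := by positivity
  have hsep : 0 < x 0 - y 0 := by
    have : 0 < d * (2 * π / ω) := by positivity
    linarith [hx.1.1, hy.1.2]
  rw [residualKernel, scaleCoords, scaleCoords]
  dsimp only
  rw [← sub_div, ← sub_div, norm_sub_eq_sqrt, ← mul_scaledPhase_eq (x 1 - y 1) hl hd hsep,
    ← mul_assoc, mul_div_cancel₀ _ hω.ne']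

lemma div_mem_Icc_of_mem_strip {l z : ℝ} (hl : 0 < l) (hd : 0 < d) (hh : h ≤ √d)
    (hz : z ∈ Icc (-(h * l / 2)) (h * l / 2)) : z / (l * √d) ∈ Icc (-1) 1 := by
  have hld : 0 < l * √d := by positivity
  have : h * l ≤ l * √d := by nlinarith
  rw [mem_Icc, le_div_iff₀ hld, div_le_iff₀ hld]
  constructor <;> linarith [hz.1, hz.2]

lemma scaleCoords_mem_of_mem_rectR1 (hω : 0 < ω) (hd : 0 < d) (hh : h ≤ √d)
    (hx : x ∈ rectR1 ω d h) : scaleCoords ω d x ∈ Icc (1 / 2) (3 / 2) ×ˢ Icc (-1) 1 := by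
  have hdl : 0 < d * (2 * π / ω) := by positivity
  refine ⟨?_, div_mem_Icc_of_mem_strip (by positivity) hd hh hx.2⟩
  rw [scaleCoords, mem_Icc, le_div_iff₀ hdl, div_le_iff₀ hdl]
  constructor <;> linarith [hx.1.1, hx.1.2]

lemma scaleCoords_mem_of_mem_rectR2 (hω : 0 < ω) (hd : 0 < d) (hh : h ≤ √d)
    (hy : y ∈ rectR2 ω d h) :
    scaleCoords ω d y ∈ Icc (-(3 / 2)) (-(1 / 2)) ×ˢ Icc (-1) 1 := by
  have hdl : 0 < d * (2 * π / ω) := by positivity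
  refine ⟨?_, div_mem_Icc_of_mem_strip (by positivity) hd hh hy.2⟩
  rw [scaleCoords, mem_Icc, le_div_iff₀ hdl, div_le_iff₀ hdl]
  constructor <;> linarith [hy.1.1, hy.1.2]

end ResidualFactor

open ResidualFactor in
/-- For every `ε > 0` there is an `N` depending only on `ε` such that for all admissible
`ω, d, h₁, h₂`, the residual oscillatory factor `exp(iω(‖x−y‖ − (x₁−y₁)))` admits an
`N`-term separated approximation on `R₁ × R₂` with accuracy `ε`. -/
theorem residual_factor_lowrank (ε : ℝ) (hε : 0 < ε) :
    ∃ N : ℕ, ∀ ω d h₁ h₂ : ℝ, 0 < ω → 1 < d → 0 < h₁ → 0 < h₂ →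
      2 * max h₁ h₂ ^ 2 ≤ d →
      ∃ α β : Fin N → EuclideanSpace ℝ (Fin 2) → ℂ,
        ∀ x ∈ rectR1 ω d h₁, ∀ y ∈ rectR2 ω d h₂,
          ‖(Complex.exp (Complex.I * ((ω * (‖x - y‖ - (x 0 - y 0)) : ℝ) : ℂ)) -
              ∑ i, α i x * β i y)‖ ≤ ε := by
  obtain ⟨N, a, b, hab⟩ := exists_sum_mul_near_of_continuousOn
    (isCompact_Icc.prod isCompact_Icc) ((isCompact_Icc.prod isCompact_Icc).prod isCompact_Icc)
    continuousOn_residualKernel hε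
  refine ⟨N, fun ω d h₁ h₂ hω hd _ _ hdh => ⟨fun i x => a i (scaleCoords ω d x),
    fun i y => b i (scaleCoords ω d y, d⁻¹), fun x hx y hy => ?_⟩⟩
  have hd₀ : 0 < d := one_pos.trans hd
  have hmax : max h₁ h₂ ≤ √d :=
    (le_abs_self _).trans (abs_le_sqrt (by nlinarith [sq_nonneg (max h₁ h₂)]))
  rw [residual_eq_residualKernel hω hd₀ hx hy]
  refine (hab _ (scaleCoords_mem_of_mem_rectR1 hω hd₀ ((le_max_left _ _).trans hmax) hx) _
    ⟨scaleCoords_mem_of_mem_rectR2 hω hd₀ ((le_max_right _ _).trans hmax) hy, ?_⟩).le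
  exact ⟨inv_nonneg.mpr hd₀.le, inv_le_one_of_one_le₀ hd.le⟩
end
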